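/- arXiv:2305.05399 — 7 statements merged into one kernel-verified Lean document; each statement's English description precedes it below -/
import Mathlib

section
/- Let Ω' ⊆ ℝ² be a compact convex set with nonempty interior (a polygon), and let F₁, F₂, F₃ be closed sets covering the boundary of Ω' such that F₁ ∩ F₃ = ∅. Then Ω' ⊆ conv(F₁) ∪ conv(F₂) ∪ conv(F₃). -/
/-!
If `x ∈ Ω'` lies in no `conv Fᵢ`, separate `x` strictly from the compact set `Fᵢ ∩ ∂Ω'` by an
open half-plane `Hᵢ = {fᵢ < uᵢ}` containing `x`. Two open half-planes through `x` meet in an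
unbounded convex set, which must cross `∂Ω'`; the point where `Hᵢ ∩ Hⱼ` crosses `∂Ω'` avoids
`Fᵢ` and `Fⱼ`. The cap `∂Ω' \ H₂` is connected (radial projection from an interior point
outside `H₂`) and covered by the disjoint closed sets `F₁` and `F₃`, so it lies in one of them,
say `F₁`; but `H₁ ∩ H₂` crosses `∂Ω'` at a point of the cap outside `F₁`. If `F₂` misses `∂Ω'`,
the cap `∂Ω' \ H₃` already lies in `F₁`.
-/

open Set Module Bornology Filter Topology
open scoped Pointwise

section LinearOrderedField

variable {𝕜 E : Type*} [Field 𝕜] [LinearOrder 𝕜] [IsStrictOrderedRing 𝕜]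
  [AddCommGroup E] [Module 𝕜 E] [FiniteDimensional 𝕜 E]

theorem mem_convexHull_iff_exists_fin_finrank_succ {s : Set E} {x : E} :
    x ∈ convexHull 𝕜 s ↔ ∃ z : Fin (finrank 𝕜 E + 1) → E, ∃ w ∈ stdSimplex 𝕜 _,
      (∀ i, z i ∈ s) ∧ ∑ i, w i • z i = x := by
  classical
  constructor
  · intro hx
    obtain ⟨ι, _, z, w, hzs, hz, hw₀, hw₁, rfl⟩ := eq_pos_convex_span_of_mem_convexHull hx
    have hcard : Fintype.card ι ≤ Fintype.card (Fin (finrank 𝕜 E + 1)) := by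
      simpa using hz.card_le_finrank_succ.trans (Nat.add_le_add_right (Submodule.finrank_le _) 1)
    obtain ⟨e⟩ := Function.Embedding.nonempty_of_card_le hcard
    obtain ⟨i₀⟩ : Nonempty ι := by
      by_contra h
      simp [not_nonempty_iff.1 h] at hw₁
    -- pad the family to `finrank 𝕜 E + 1` points, with weight `0` on the padding
    refine ⟨Function.extend e z fun _ => z i₀, Function.extend e w 0, ⟨fun j => ?_, ?_⟩,
      fun j => ?_, ?_⟩
    · rw [Function.extend_def]
      split_ifs
      exacts [(hw₀ _).le, le_rfl]
    · rw [← hw₁]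
      refine (Fintype.sum_of_injective e e.injective _ _ (fun j hj => ?_) fun i => ?_).symm
      · exact Function.extend_apply' _ _ _ (by simpa using hj)
      · exact (e.injective.extend_apply _ _ _).symm
    · rw [Function.extend_def]
      split_ifs
      exacts [hzs (mem_range_self _), hzs (mem_range_self i₀)]
    · refine (Fintype.sum_of_injective e e.injective _ _ (fun j hj => ?_) fun i => ?_).symm
      · rw [Function.extend_apply' _ _ _ (by simpa using hj)]
        exact zero_smul _ _
      · simp only [e.injective.extend_apply]
  · rintro ⟨z, w, ⟨hw₀, hw₁⟩, hz, rfl⟩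
    exact mem_convexHull_of_exists_fintype w z hw₀ hw₁ hz rfl

theorem exists_ne_zero_apply_nonpos (hE : 1 < finrank 𝕜 E) (f g : E →ₗ[𝕜] 𝕜) :
    ∃ v ≠ 0, f v ≤ 0 ∧ g v ≤ 0 := by
  obtain ⟨v, hfv, hv⟩ := Submodule.exists_mem_ne_zero_of_ne_bot
    (f.ker_ne_bot_of_finrank_lt (by rwa [finrank_self]))
  rw [LinearMap.mem_ker] at hfv
  rcases le_total (g v) 0 with hgv | hgv
  · exact ⟨v, hv, hfv.le, hgv⟩
  · exact ⟨-v, neg_ne_zero.2 hv, by simp [hfv], by simpa using hgv⟩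

end LinearOrderedField

theorem IsPreconnected.subset_or_subset_of_isClosed {X : Type*} [TopologicalSpace X]
    {s u v : Set X} (hs : IsPreconnected s) (hu : IsClosed u) (hv : IsClosed v)
    (huv : Disjoint u v) (hsuv : s ⊆ u ∪ v) : s ⊆ u ∨ s ⊆ v := by
  by_contra! h
  simp only [not_subset] at h
  obtain ⟨⟨p, hps, hpu⟩, ⟨q, hqs, hqv⟩⟩ := h
  obtain ⟨r, -, hru, hrv⟩ := isPreconnected_closed_iff.1 hs u v hu hv hsuv
    ⟨q, hqs, (hsuv hqs).resolve_right hqv⟩ ⟨p, hps, (hsuv hps).resolve_left hpu⟩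
  exact huv.notMem_of_mem_left hru hrv

theorem IsPreconnected.inter_frontier_nonempty {X : Type*} [TopologicalSpace X] {s t : Set X}
    (hs : IsPreconnected s) (hst : (s ∩ t).Nonempty) (hst' : (s \ t).Nonempty) :
    (s ∩ frontier t).Nonempty := by
  rw [frontier_eq_closure_inter_closure]
  refine isPreconnected_closed_iff.1 hs _ _ isClosed_closure isClosed_closure ?_ ?_ ?_
  · rw [← closure_union, union_compl_self, closure_univ]
    exact subset_univ s
  · exact hst.mono (inter_subset_inter_right s subset_closure)
  · exact hst'.mono (inter_subset_inter_right s subset_closure)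

theorem Convex.interior_inter_open_nonempty_iff {𝕜 E : Type*} [Field 𝕜] [LinearOrder 𝕜]
    [IsStrictOrderedRing 𝕜] [AddCommGroup E] [Module 𝕜 E] [TopologicalSpace E]
    [IsTopologicalAddGroup E] [TopologicalSpace 𝕜] [OrderTopology 𝕜] [ContinuousSMul 𝕜 E]
    {A U : Set E} (hA : Convex 𝕜 A) (hA' : (interior A).Nonempty) (hU : IsOpen U) :
    (interior A ∩ U).Nonempty ↔ (closure A ∩ U).Nonempty := by
  rw [← closure_inter_open_nonempty_iff hU,
    hA.closure_interior_eq_closure_of_nonempty_interior hA', closure_inter_open_nonempty_iff hU]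

section NormedSpace

variable {E : Type*} [NormedAddCommGroup E] [NormedSpace ℝ E]

theorem isCompact_convexHull [FiniteDimensional ℝ E] {K : Set E} (hK : IsCompact K) :
    IsCompact (convexHull ℝ K) := by
  have : convexHull ℝ K = (fun p : (Fin (finrank ℝ E + 1) → E) × (Fin _ → ℝ) =>
      ∑ i, p.2 i • p.1 i) '' (univ.pi (fun _ => K) ×ˢ stdSimplex ℝ _) := by
    ext x
    simp only [mem_convexHull_iff_exists_fin_finrank_succ, mem_image, mem_prod, mem_univ_pi,
      Prod.exists]
    exact ⟨fun ⟨z, w, hw, hz, h⟩ => ⟨z, w, ⟨hz, hw⟩, h⟩,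
      fun ⟨z, w, ⟨hz, hw⟩, h⟩ => ⟨z, w, hw, hz, h⟩⟩
  rw [this]
  exact ((isCompact_univ_pi fun _ => hK).prod (isCompact_stdSimplex _ _)).image (by fun_prop)

theorem exists_lt_lt_of_notMem_convexHull [FiniteDimensional ℝ E] {K : Set E} (hK : IsCompact K)
    {x : E} (hx : x ∉ convexHull ℝ K) :
    ∃ (f : E →L[ℝ] ℝ) (u : ℝ), f x < u ∧ ∀ b ∈ K, u < f b :=
  let ⟨f, u, hfx, hf⟩ := geometric_hahn_banach_point_closed (convex_convexHull ℝ K)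
    (isCompact_convexHull hK).isClosed hx
  ⟨f, u, hfx, fun b hb => hf b (subset_convexHull ℝ K hb)⟩

theorem exists_mem_frontier_lt_lt [FiniteDimensional ℝ E] (hE : 1 < finrank ℝ E) {A : Set E}
    (hA : IsBounded A) {x : E} (hx : x ∈ A) (f g : E →L[ℝ] ℝ) {a b : ℝ} (hfx : f x < a)
    (hgx : g x < b) : ∃ p ∈ frontier A, f p < a ∧ g p < b := by
  -- `C` contains the ray from `x` along a common recession direction `v`, so it leaves `A`
  set C := {p | f p < a} ∩ {p | g p < b}
  have hC : Convex ℝ C :=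
    (convex_halfSpace_lt f.isLinear a).inter (convex_halfSpace_lt g.isLinear b)
  obtain ⟨v, hv, hfv, hgv⟩ := exists_ne_zero_apply_nonpos hE (f : E →ₗ[ℝ] ℝ) g
  rw [ContinuousLinearMap.coe_coe] at hfv hgv
  have hray : Tendsto (fun t : ℝ => x + t • v) atTop (cobounded E) := by
    refine (tendsto_const_add_cobounded x).comp ?_
    rw [← tendsto_norm_atTop_iff_cobounded]
    simp only [norm_smul, Real.norm_eq_abs]
    exact tendsto_abs_atTop_atTop.atTop_mul_const (norm_pos_iff.2 hv)
  obtain ⟨t, ht, htA⟩ := ((eventually_ge_atTop 0).and (hray.eventually_mem hA)).exists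
  have htC : x + t • v ∈ C := by
    simp only [C, mem_inter_iff, mem_ofPred_eq, map_add, map_smul, smul_eq_mul]
    constructor <;> nlinarith
  obtain ⟨p, ⟨hpf, hpg⟩, hp⟩ :=
    hC.isPreconnected.inter_frontier_nonempty ⟨x, ⟨hfx, hgx⟩, hx⟩
    ⟨_, htC, htA⟩
  exact ⟨p, hp, hpf, hpg⟩

theorem frontier_inter_le_not_subset [FiniteDimensional ℝ E] (hE : 1 < finrank ℝ E)
    {A F : Set E} (hA : IsBounded A) {x : E} (hx : x ∈ A) {f g : E →L[ℝ] ℝ} {u v : ℝ}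
    (hf : ∀ p ∈ F ∩ frontier A, u < f p) (hfx : f x < u) (hgx : g x < v) :
    ¬frontier A ∩ {p | g p ≤ v} ⊆ F := fun hcap =>
  let ⟨p, hp, hpf, hpg⟩ := exists_mem_frontier_lt_lt hE hA hx f g hfx hgx
  (hf p ⟨hcap ⟨hp, hpg.le⟩, hp⟩).not_gt hpf

-- The radial projection from `0` maps `A ∩ {f ≤ u}` onto the cap.
theorem isPreconnected_frontier_inter_le_of_zero_mem_interior {A : Set E} (hAc : Convex ℝ A)
    (hAcl : IsClosed A) (hAb : IsBounded A) (hA : (0 : E) ∈ interior A) (f : E →ₗ[ℝ] ℝ)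
    {u : ℝ} (hu : u < 0) : IsPreconnected (frontier A ∩ {p | f p ≤ u}) := by
  have hA₀ : A ∈ 𝓝 0 := mem_interior_iff_mem_nhds.1 hA
  set S := A ∩ {p | f p ≤ u}
  have hS : ∀ p ∈ S, 0 < gauge A p := fun p hp =>
    (gauge_pos (absorbent_nhds_zero hA₀) ((NormedSpace.isVonNBounded_iff ℝ).2 hAb)).2 <| by
      rintro rfl
      have : f 0 ≤ u := hp.2
      linarith [map_zero f]
  have hcap : frontier A ∩ {p | f p ≤ u} = (fun p => (gauge A p)⁻¹ • p) '' S := by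
    apply Subset.antisymm
    · rintro q ⟨hq, hqu⟩
      refine ⟨q, ⟨hAcl.frontier_subset hq, hqu⟩, ?_⟩
      simp [(gauge_eq_one_iff_mem_frontier hAc hA₀).2 hq]
    · rintro _ ⟨p, hp, rfl⟩
      have hγ := hS p hp
      have hγ₁ : gauge A p ≤ 1 := gauge_le_one_of_mem hp.1
      refine ⟨(gauge_eq_one_iff_mem_frontier hAc hA₀).1 ?_, ?_⟩
      · rw [gauge_smul_of_nonneg (inv_nonneg.2 hγ.le), smul_eq_mul, inv_mul_cancel₀ hγ.ne']
      · have hfp : f p ≤ u := hp.2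
        have : 1 ≤ (gauge A p)⁻¹ := one_le_inv₀ hγ |>.2 hγ₁
        simp only [mem_ofPred_eq, map_smul, smul_eq_mul]
        nlinarith
  rw [hcap]
  refine ((hAc.inter (convex_halfSpace_le f.isLinear u)).isPreconnected.image _ ?_)
  refine ContinuousOn.smul ?_ continuousOn_id
  exact ((continuous_gauge hAc hA₀).continuousOn).inv₀ fun p hp => (hS p hp).ne'

theorem isPreconnected_frontier_inter_le {A : Set E} (hAc : Convex ℝ A)
    (hAcl : IsClosed A) (hAb : IsBounded A) {c : E} (hc : c ∈ interior A) (f : E →ₗ[ℝ] ℝ)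
    {u : ℝ} (hu : u < f c) : IsPreconnected (frontier A ∩ {p | f p ≤ u}) := by
  have hcap : frontier A ∩ {p | f p ≤ u} =
      c +ᵥ (frontier (-c +ᵥ A) ∩ {p | f p ≤ u - f c}) := by
    have hfr : frontier (-c +ᵥ A) = -c +ᵥ frontier A := by
      rw [← image_vadd, ← image_vadd]
      exact ((Homeomorph.vadd (-c)).image_frontier A).symm
    ext p
    simp [hfr, mem_vadd_set_iff_neg_vadd_mem]
  rw [hcap, ← image_vadd]
  refine (isPreconnected_frontier_inter_le_of_zero_mem_interior (hAc.vadd _) (hAcl.vadd _)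
    (hAb.vadd _) ?_ f (by linarith)).image _ (continuous_const_vadd c).continuousOn
  rw [interior_vadd]
  exact ⟨c, hc, neg_add_cancel c⟩

end NormedSpace

theorem polygon_cover_three_closed_sets_disjoint_pair
    (Ω' : Set (EuclideanSpace ℝ (Fin 2)))
    (hcomp : IsCompact Ω') (hconv : Convex ℝ Ω')
    (hint : (interior Ω').Nonempty)
    (F₁ F₂ F₃ : Set (EuclideanSpace ℝ (Fin 2)))
    (h1 : IsClosed F₁) (h2 : IsClosed F₂) (h3 : IsClosed F₃)
    (hcover : frontier Ω' ⊆ F₁ ∪ F₂ ∪ F₃)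
    (hdisj : F₁ ∩ F₃ = ∅) :
    Ω' ⊆ convexHull ℝ F₁ ∪ convexHull ℝ F₂ ∪ convexHull ℝ F₃ := by
  intro x hx
  by_contra hx'
  simp only [mem_union, not_or] at hx'
  obtain ⟨⟨hx₁, hx₂⟩, hx₃⟩ := hx'
  have hE : 1 < finrank ℝ (EuclideanSpace ℝ (Fin 2)) := by simp
  have hS : IsCompact (frontier Ω') :=
    hcomp.of_isClosed_subset isClosed_frontier hcomp.isClosed.frontier_subset
  have sep (F) (hF : IsClosed F) (hxF : x ∉ convexHull ℝ F) :
      ∃ (f : EuclideanSpace ℝ (Fin 2) →L[ℝ] ℝ) (u : ℝ),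
        f x < u ∧ ∀ p ∈ F ∩ frontier Ω', u < f p :=
    exists_lt_lt_of_notMem_convexHull (hS.inter_left hF)
      (mt (convexHull_mono inter_subset_left ·) hxF)
  obtain ⟨f₁, u₁, hfx₁, hf₁⟩ := sep F₁ h1 hx₁
  obtain ⟨f₂, u₂, hfx₂, hf₂⟩ := sep F₂ h2 hx₂
  obtain ⟨f₃, u₃, hfx₃, hf₃⟩ := sep F₃ h3 hx₃
  rcases (F₂ ∩ frontier Ω').eq_empty_or_nonempty with hF₂ | ⟨b, hb₂, hb⟩
  · refine frontier_inter_le_not_subset hE hcomp.isBounded hx hf₁ hfx₁ hfx₃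
      fun p ⟨hp, hpu⟩ => ?_
    rcases hcover hp with (h | h) | h
    exacts [h, (hF₂.subset ⟨h, hp⟩).elim, absurd (hf₃ p ⟨h, hp⟩) (not_lt.2 hpu)]
  obtain ⟨c, hc, hcu⟩ := (hconv.interior_inter_open_nonempty_iff hint
    (isOpen_lt continuous_const f₂.continuous)).2
      ⟨b, frontier_subset_closure hb, hf₂ b ⟨hb₂, hb⟩⟩
  have hcap : frontier Ω' ∩ {p | f₂ p ≤ u₂} ⊆ F₁ ∪ F₃ := fun p ⟨hp, hpu⟩ =>
    (hcover hp).imp_left (Or.resolve_right · fun h => (hf₂ p ⟨h, hp⟩).not_ge hpu)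
  rcases (isPreconnected_frontier_inter_le hconv hcomp.isClosed hcomp.isBounded hc f₂ hcu
    ).subset_or_subset_of_isClosed h1 h3 (disjoint_iff_inter_eq_empty.2 hdisj) hcap with h | h
  exacts [frontier_inter_le_not_subset hE hcomp.isBounded hx hf₁ hfx₁ hfx₂ h,
    frontier_inter_le_not_subset hE hcomp.isBounded hx hf₃ hfx₃ hfx₂ h]
end

section
/- If three closed sets B₁, B₂, B₃ cover the circle S¹ and none of them contains a pair of antipodal points, then there exists a point x ∈ S¹ with x ∈ B₁, −x ∈ B₂, and x ∈ B₃ (i.e., B₁ ∩ (−B₂) ∩ B₃ ≠ ∅). -/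
theorem fan_theorem_circle_three_sets
    (B₁ B₂ B₃ : Set (EuclideanSpace ℝ (Fin 2)))
    (h1 : IsClosed B₁) (h2 : IsClosed B₂) (h3 : IsClosed B₃)
    (hcover : Metric.sphere (0 : EuclideanSpace ℝ (Fin 2)) 1 ⊆ B₁ ∪ B₂ ∪ B₃)
    (ha1 : ∀ x ∈ Metric.sphere (0 : EuclideanSpace ℝ (Fin 2)) 1, x ∈ B₁ → -x ∉ B₁)
    (ha2 : ∀ x ∈ Metric.sphere (0 : EuclideanSpace ℝ (Fin 2)) 1, x ∈ B₂ → -x ∉ B₂)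
    (ha3 : ∀ x ∈ Metric.sphere (0 : EuclideanSpace ℝ (Fin 2)) 1, x ∈ B₃ → -x ∉ B₃) :
    ∃ x ∈ Metric.sphere (0 : EuclideanSpace ℝ (Fin 2)) 1,
      x ∈ B₁ ∧ -x ∈ B₂ ∧ x ∈ B₃ := by
  set S := Metric.sphere (0 : EuclideanSpace ℝ (Fin 2)) 1 with hS
  have hnegS : ∀ x : EuclideanSpace ℝ (Fin 2), x ∈ S → -x ∈ S := by
    intro x hx
    simpa [hS, mem_sphere_iff_norm] using hx
  by_cases hAC : ∃ x ∈ S, x ∈ B₁ ∧ x ∈ B₃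
  · obtain ⟨x, hxS, hx1, hx3⟩ := hAC
    refine ⟨x, hxS, hx1, ?_, hx3⟩
    have hnx : -x ∈ S := hnegS x hxS
    rcases hcover hnx with (h | h) | h
    · exact absurd h (ha1 x hxS hx1)
    · exact h
    · exact absurd h (ha3 x hxS hx3)
  · exfalso
    push_neg at hAC
    -- X and Y : two closed, disjoint, antipodal-free sets covering S
    set X : Set (EuclideanSpace ℝ (Fin 2)) :=
      S ∩ (B₁ ∪ (B₂ ∩ (Neg.neg ⁻¹' B₃))) with hX
    set Y : Set (EuclideanSpace ℝ (Fin 2)) :=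
      S ∩ (B₃ ∪ (B₂ ∩ (Neg.neg ⁻¹' B₁))) with hY
    have hXc : IsClosed X :=
      Metric.isClosed_sphere.inter
        (h1.union (h2.inter (h3.preimage continuous_neg)))
    have hYc : IsClosed Y :=
      Metric.isClosed_sphere.inter
        (h3.union (h2.inter (h1.preimage continuous_neg)))
    have hcov : S ⊆ X ∪ Y := by
      intro x hx
      rcases hcover hx with (hb | hb) | hb
      · exact Or.inl ⟨hx, Or.inl hb⟩
      · have hnx : -x ∈ S := hnegS x hx
        have hnb2 : -x ∉ B₂ := ha2 x hx hb
        rcases hcover hnx with (hc | hc) | hc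
        · exact Or.inr ⟨hx, Or.inr ⟨hb, hc⟩⟩
        · exact absurd hc hnb2
        · exact Or.inl ⟨hx, Or.inr ⟨hb, hc⟩⟩
      · exact Or.inr ⟨hx, Or.inl hb⟩
    have hdisj : X ∩ Y = ∅ := by
      ext z
      simp only [Set.mem_inter_iff, Set.mem_empty_iff_false, iff_false]
      rintro ⟨⟨hzS, hzX⟩, ⟨_, hzY⟩⟩
      have hnzS : -z ∈ S := hnegS z hzS
      rcases hzX with hz1 | ⟨hz2, hz3'⟩
      · rcases hzY with hz3 | ⟨_, hz1'⟩
        · exact hAC z hzS hz1 hz3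
        · exact ha1 z hzS hz1 hz1'
      · rcases hzY with hz3 | ⟨_, hz1'⟩
        · exact ha3 z hzS hz3 (by simpa using hz3')
        · exact hAC (-z) hnzS hz1' hz3'
    -- sphere is connected
    have hrank : (1 : Cardinal) < Module.rank ℝ (EuclideanSpace ℝ (Fin 2)) := by
      rw [← Module.finrank_eq_rank]
      norm_cast
      simp [finrank_euclideanSpace_fin]
    have hpre : IsPreconnected S :=
      (isConnected_sphere hrank 0 zero_le_one).isPreconnected
    -- from preconnectedness with closed cover, S is inside X or Y
    have hsub : S ⊆ X ∨ S ⊆ Y := by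
      rcases (S ∩ X).eq_empty_or_nonempty with he | hne
      · right
        intro x hx
        rcases hcov hx with h | h
        · exact absurd (Set.mem_inter hx h) (by simp [he])
        · exact h
      rcases (S ∩ Y).eq_empty_or_nonempty with he | hne'
      · left
        intro x hx
        rcases hcov hx with h | h
        · exact h
        · exact absurd (Set.mem_inter hx h) (by simp [he])
      · exfalso
        obtain ⟨z, _, hz⟩ := (isPreconnected_closed_iff.1 hpre) X Y hXc hYc hcov hne hne'
        rw [hdisj] at hz
        exact hz
    -- but X and Y are antipodal-free, contradiction since some p, -p ∈ S
    obtain ⟨p, hp⟩ : S.Nonempty := NormedSpace.sphere_nonempty.mpr zero_le_one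
    have hnp : -p ∈ S := hnegS p hp
    rcases hsub with hs | hs
    · obtain ⟨_, hp'⟩ := hs hp
      obtain ⟨_, hnp'⟩ := hs hnp
      rcases hp' with h1p | ⟨h2p, h3p⟩
      · rcases hnp' with hq | ⟨hq2, hq3⟩
        · exact ha1 p hp h1p hq
        · exact hAC p hp h1p (by simpa using hq3)
      · rcases hnp' with hq | ⟨hq2, _⟩
        · exact hAC (-p) hnp hq (by simpa using h3p)
        · exact ha2 p hp h2p hq2
    · obtain ⟨_, hp'⟩ := hs hp
      obtain ⟨_, hnp'⟩ := hs hnp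
      rcases hp' with h3p | ⟨h2p, h1p⟩
      · rcases hnp' with hq | ⟨hq2, hq1⟩
        · exact ha3 p hp h3p hq
        · exact hAC p hp (by simpa using hq1) h3p
      · rcases hnp' with hq | ⟨hq2, _⟩
        · exact hAC (-p) hnp (by simpa using h1p) hq
        · exact ha2 p hp h2p hq2
end

section
/- Berge's theorem for three sets in the plane: let C₁, C₂, C₃ be convex subsets of ℝ² whose union C₁ ∪ C₂ ∪ C₃ is convex, and suppose every pair has a common point (C₁ ∩ C₂ ≠ ∅, C₁ ∩ C₃ ≠ ∅, C₂ ∩ C₃ ≠ ∅). If additionally the sets are closed and the union is compact, then C₁ ∩ C₂ ∩ C₃ ≠ ∅. -/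
lemma berge_aux {E : Type*} [AddCommGroup E] [Module ℝ E]
    {C : Set E} (hC : Convex ℝ C) {a w : E} {s₂ s₃ : ℝ}
    (h0 : 0 ≤ s₂) (hle : s₂ ≤ s₃) (ha : a ∈ C)
    (hz : a + s₃ • (w - a) ∈ C) : a + s₂ • (w - a) ∈ C := by
  rcases eq_or_lt_of_le (h0.trans hle) with h3 | h3
  · have h2 : s₂ = 0 := le_antisymm (hle.trans h3.symm.le) h0
    simpa [h2] using ha
  · have hr0 : 0 ≤ s₂ / s₃ := div_nonneg h0 h3.le
    have hr1 : s₂ / s₃ ≤ 1 := (div_le_one h3).mpr hle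
    have hmem : a + s₂ • (w - a) ∈ segment ℝ a (a + s₃ • (w - a)) := by
      rw [segment_eq_image']
      refine ⟨s₂ / s₃, ⟨hr0, hr1⟩, ?_⟩
      show a + (s₂ / s₃) • (a + s₃ • (w - a) - a) = a + s₂ • (w - a)
      rw [add_sub_cancel_left, smul_smul, div_mul_cancel₀ _ h3.ne']
    exact hC.segment_subset ha hz hmem

theorem berge_three_sets_plane
    (C₁ C₂ C₃ : Set (EuclideanSpace ℝ (Fin 2)))
    (hc1 : Convex ℝ C₁) (hc2 : Convex ℝ C₂) (hc3 : Convex ℝ C₃)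
    (hunion : Convex ℝ (C₁ ∪ C₂ ∪ C₃))
    (h12 : (C₁ ∩ C₂).Nonempty) (h13 : (C₁ ∩ C₃).Nonempty) (h23 : (C₂ ∩ C₃).Nonempty)
    (hcl1 : IsClosed C₁) (hcl2 : IsClosed C₂) (hcl3 : IsClosed C₃)
    (hcomp : IsCompact (C₁ ∪ C₂ ∪ C₃)) :
    (C₁ ∩ C₂ ∩ C₃).Nonempty := by
  obtain ⟨c, hc1m, hc2m⟩ := h12
  obtain ⟨b, hb1m, hb3m⟩ := h13
  obtain ⟨a, ha2m, ha3m⟩ := h23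
  set x : ℝ → EuclideanSpace ℝ (Fin 2) := fun t => b + t • (c - b) with hx_def
  set g : ℝ × ℝ → EuclideanSpace ℝ (Fin 2) := fun p => a + p.1 • (x p.2 - a) with hg_def
  have hgcont : Continuous g := by
    unfold g x
    fun_prop
  have hxC1 : ∀ t ∈ Set.Icc (0:ℝ) 1, x t ∈ C₁ := by
    intro t ht
    have : x t ∈ segment ℝ b c := by
      rw [segment_eq_image']; exact ⟨t, ht, rfl⟩
    exact hc1.segment_subset hb1m hc1m this
  -- the two "time" sets
  set K₂ : Set (ℝ × ℝ) := (Set.Icc (0:ℝ) 1 ×ˢ Set.Icc (0:ℝ) 1) ∩ g ⁻¹' (C₁ ∩ C₂) with hK2def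
  set K₃ : Set (ℝ × ℝ) := (Set.Icc (0:ℝ) 1 ×ˢ Set.Icc (0:ℝ) 1) ∩ g ⁻¹' (C₁ ∩ C₃) with hK3def
  have hK2c : IsCompact K₂ :=
    (isCompact_Icc.prod isCompact_Icc).inter_right ((hcl1.inter hcl2).preimage hgcont)
  have hK3c : IsCompact K₃ :=
    (isCompact_Icc.prod isCompact_Icc).inter_right ((hcl1.inter hcl3).preimage hgcont)
  set T₂ : Set ℝ := Prod.snd '' K₂ with hT2def
  set T₃ : Set ℝ := Prod.snd '' K₃ with hT3def
  have hT2closed : IsClosed T₂ := (hK2c.image continuous_snd).isClosed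
  have hT3closed : IsClosed T₃ := (hK3c.image continuous_snd).isClosed
  -- every t in [0,1] lies in T₂ ∪ T₃
  have hcover : Set.Icc (0:ℝ) 1 ⊆ T₂ ∪ T₃ := by
    intro t ht
    have hxt : x t ∈ C₁ := hxC1 t ht
    have hsegsub : segment ℝ a (x t) ⊆ C₁ ∪ (C₂ ∪ C₃) := by
      have h1 : segment ℝ a (x t) ⊆ C₁ ∪ C₂ ∪ C₃ :=
        hunion.segment_subset (Or.inl (Or.inr ha2m)) (Or.inl (Or.inl hxt))
      intro y hy
      rcases h1 hy with (h | h) | h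
      · exact Or.inl h
      · exact Or.inr (Or.inl h)
      · exact Or.inr (Or.inr h)
    have hpre : IsPreconnected (segment ℝ a (x t)) := (convex_segment a (x t)).isPreconnected
    have := (isPreconnected_closed_iff.mp hpre) C₁ (C₂ ∪ C₃) hcl1 (hcl2.union hcl3)
      hsegsub ⟨x t, right_mem_segment ℝ a (x t), hxt⟩
      ⟨a, left_mem_segment ℝ a (x t), Or.inr ha3m⟩
    obtain ⟨y, hyseg, hyC1, hy23⟩ := this
    rw [segment_eq_image'] at hyseg
    obtain ⟨s, hs, rfl⟩ := hyseg
    rcases hy23 with hy2 | hy3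
    · exact Or.inl ⟨(s, t), ⟨⟨hs, ht⟩, hyC1, hy2⟩, rfl⟩
    · exact Or.inr ⟨(s, t), ⟨⟨hs, ht⟩, hyC1, hy3⟩, rfl⟩
  -- endpoints
  have h0T3 : (0:ℝ) ∈ T₃ := by
    refine ⟨(1, 0), ⟨⟨Set.mem_Icc.mpr ⟨zero_le_one, le_refl 1⟩,
      Set.mem_Icc.mpr ⟨le_refl 0, zero_le_one⟩⟩, ?_⟩, rfl⟩
    have h : g (1, 0) = b := by simp [hg_def, hx_def]
    simp only [Set.mem_preimage, h]; exact ⟨hb1m, hb3m⟩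
  have h1T2 : (1:ℝ) ∈ T₂ := by
    refine ⟨(1, 1), ⟨⟨Set.mem_Icc.mpr ⟨zero_le_one, le_refl 1⟩,
      Set.mem_Icc.mpr ⟨zero_le_one, le_refl 1⟩⟩, ?_⟩, rfl⟩
    have h : g (1, 1) = c := by simp [hg_def, hx_def]
    simp only [Set.mem_preimage, h]; exact ⟨hc1m, hc2m⟩
  -- connectedness of [0,1] gives a common t
  have := (isPreconnected_closed_iff.mp isPreconnected_Icc) T₂ T₃ hT2closed hT3closed
    hcover ⟨1, Set.mem_Icc.mpr ⟨zero_le_one, le_refl 1⟩, h1T2⟩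
    ⟨0, Set.mem_Icc.mpr ⟨le_refl 0, zero_le_one⟩, h0T3⟩
  obtain ⟨t, _, ht2, ht3⟩ := this
  obtain ⟨⟨s₂, t₂⟩, ⟨⟨hs₂, _⟩, hg2⟩, ht₂eq⟩ := ht2
  obtain ⟨⟨s₃, t₃⟩, ⟨⟨hs₃, _⟩, hg3⟩, ht₃eq⟩ := ht3
  simp only at ht₂eq ht₃eq
  have hts : t₃ = t₂ := ht₃eq.trans ht₂eq.symm
  rw [hts] at hg3
  have hg2' : a + s₂ • (x t₂ - a) ∈ C₁ ∩ C₂ := hg2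
  have hg3' : a + s₃ • (x t₂ - a) ∈ C₁ ∩ C₃ := hg3
  rcases le_total s₂ s₃ with hle | hle
  · have h3 : a + s₂ • (x t₂ - a) ∈ C₃ := berge_aux hc3 hs₂.1 hle ha3m hg3'.2
    exact ⟨a + s₂ • (x t₂ - a), ⟨hg2'.1, hg2'.2⟩, h3⟩
  · have h2 : a + s₃ • (x t₂ - a) ∈ C₂ := berge_aux hc2 hs₃.1 hle ha2m hg2'.2
    exact ⟨a + s₃ • (x t₂ - a), ⟨hg3'.1, h2⟩, hg3'.2⟩
end

section
/- Let [u, v] ⊆ ℝⁿ be a segment covered by three closed convex sets Ω₁, Ω₂, Ω₃ with u ∈ Ω₁ and v ∈ Ω₂, and suppose no two of the three sets cover the segment by themselves. Then there exist points p ∈ Ω₁ ∩ Ω₃ and q ∈ Ω₂ ∩ Ω₃ on the segment such that p lies between u and q (i.e., p = u + s(v−u), q = u + t(v−u) with 0 ≤ s ≤ t ≤ 1). -/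
theorem segment_three_convex_cover {n : ℕ}
    (Ω₁ Ω₂ Ω₃ : Set (Fin n → ℝ))
    (hcl1 : IsClosed Ω₁) (hcl2 : IsClosed Ω₂) (hcl3 : IsClosed Ω₃)
    (hcv1 : Convex ℝ Ω₁) (hcv2 : Convex ℝ Ω₂) (hcv3 : Convex ℝ Ω₃)
    (u v : Fin n → ℝ)
    (hcover : segment ℝ u v ⊆ Ω₁ ∪ Ω₂ ∪ Ω₃)
    (hu : u ∈ Ω₁) (hv : v ∈ Ω₂)
    (h12 : ¬ segment ℝ u v ⊆ Ω₁ ∪ Ω₂)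
    (h13 : ¬ segment ℝ u v ⊆ Ω₁ ∪ Ω₃)
    (h23 : ¬ segment ℝ u v ⊆ Ω₂ ∪ Ω₃) :
    ∃ s t : ℝ, 0 ≤ s ∧ s ≤ t ∧ t ≤ 1 ∧
      u + s • (v - u) ∈ Ω₁ ∩ Ω₃ ∧ u + t • (v - u) ∈ Ω₂ ∩ Ω₃ := by
  set f : ℝ →ᵃ[ℝ] (Fin n → ℝ) := AffineMap.lineMap u v with hf
  have hfc : Continuous f := AffineMap.lineMap_continuous
  have hfmem : ∀ t : ℝ, t ∈ Set.Icc (0:ℝ) 1 → f t ∈ segment ℝ u v := by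
    intro t ht
    rw [segment_eq_image_lineMap]
    exact ⟨t, ht, rfl⟩
  have hfval : ∀ t : ℝ, f t = u + t • (v - u) := by
    intro t
    simp [hf, AffineMap.lineMap_apply]
    module
  set A : Set ℝ := f ⁻¹' Ω₁ ∩ Set.Icc 0 1 with hA
  set B : Set ℝ := f ⁻¹' Ω₂ ∩ Set.Icc 0 1 with hB
  have hAcl : IsClosed A := (hcl1.preimage hfc).inter isClosed_Icc
  have hBcl : IsClosed B := (hcl2.preimage hfc).inter isClosed_Icc
  have hAcv : Convex ℝ A := (hcv1.affine_preimage f).inter (convex_Icc 0 1)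
  have hBcv : Convex ℝ B := (hcv2.affine_preimage f).inter (convex_Icc 0 1)
  have h0A : (0:ℝ) ∈ A := by
    constructor
    · simp [hf, Set.mem_preimage, AffineMap.lineMap_apply_zero]; exact hu
    · exact Set.mem_Icc.2 ⟨le_refl 0, zero_le_one⟩
  have h1B : (1:ℝ) ∈ B := by
    constructor
    · simp [hf, Set.mem_preimage, AffineMap.lineMap_apply_one]; exact hv
    · exact Set.mem_Icc.2 ⟨zero_le_one, le_refl 1⟩
  have hAbdd : BddAbove A := (isCompact_Icc.bddAbove).mono Set.inter_subset_right
  have hBbdd : BddBelow B := (isCompact_Icc.bddBelow).mono Set.inter_subset_right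
  set a := sSup A with ha
  set b := sInf B with hb
  have haA : a ∈ A := hAcl.csSup_mem ⟨0, h0A⟩ hAbdd
  have hbB : b ∈ B := hBcl.csInf_mem ⟨1, h1B⟩ hBbdd
  have ha0 : 0 ≤ a := haA.2.1
  have hb1 : b ≤ 1 := hbB.2.2
  have hab : a < b := by
    by_contra hc
    push_neg at hc
    apply h12
    intro x hx
    rw [segment_eq_image_lineMap] at hx
    obtain ⟨t, ht, rfl⟩ := hx
    rcases le_or_gt t a with h | h
    · left
      exact (hAcv.ordConnected.out h0A haA ⟨ht.1, h⟩).1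
    · right
      exact (hBcv.ordConnected.out hbB h1B ⟨le_of_lt (lt_of_le_of_lt hc h), ht.2⟩).1
  have hIoo : Set.Ioo a b ⊆ f ⁻¹' Ω₃ := by
    intro t ht
    have htIcc : t ∈ Set.Icc (0:ℝ) 1 := ⟨le_of_lt (lt_of_le_of_lt ha0 ht.1), le_of_lt (lt_of_lt_of_le ht.2 hb1)⟩
    have := hcover (hfmem t htIcc)
    rcases this with (h1 | h2) | h3
    · exact absurd (le_csSup hAbdd ⟨h1, htIcc⟩) (not_le.2 ht.1)
    · exact absurd (csInf_le hBbdd ⟨h2, htIcc⟩) (not_le.2 ht.2)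
    · exact h3
  have hIcc : Set.Icc a b ⊆ f ⁻¹' Ω₃ := by
    have h1 : Set.Icc a b = closure (Set.Ioo a b) := (closure_Ioo hab.ne).symm
    rw [h1]
    exact (hcl3.preimage hfc).closure_subset_iff.2 hIoo
  refine ⟨a, b, ha0, hab.le, hb1, ?_, ?_⟩
  · rw [← hfval]
    exact ⟨haA.1, hIcc ⟨le_refl a, hab.le⟩⟩
  · rw [← hfval]
    exact ⟨hbB.1, hIcc ⟨hab.le, le_refl b⟩⟩
end

section
/- Consider the constraints: x₁, x₂, x₃, x₄ ≥ 0, y₁, …, y_k ≥ 0, and subsets Ω₁, …, Ω_k covering [0,1], with x₂ − x₃ ≤ x₁, and for each i and each ω ∈ Ωᵢ: x₃ ≤ ω x₄ ≤ x₂ and (ω + 2) yᵢ + (3 − ω) x₄ = 10. Then for any k ≥ 1, every feasible solution satisfies x₁ ≥ 2, and the value x₁ = 2 is attained (e.g., with x₁ = x₂ = x₄ = 2, x₃ = 0, y₁ = ⋯ = y_k = 2 and any cover). -/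
theorem example_P_finite_adaptability_value :
    IsLeast {val : ℝ | ∃ (k : ℕ), 1 ≤ k ∧ ∃ (Ωs : Fin k → Set ℝ)
      (x₁ x₂ x₃ x₄ : ℝ) (ys : Fin k → ℝ),
      0 ≤ x₁ ∧ 0 ≤ x₂ ∧ 0 ≤ x₃ ∧ 0 ≤ x₄ ∧ (∀ i, 0 ≤ ys i) ∧
      (⋃ i, Ωs i) = Set.Icc (0:ℝ) 1 ∧
      x₂ - x₃ ≤ x₁ ∧
      (∀ i, ∀ ω ∈ Ωs i, x₃ ≤ ω * x₄ ∧ ω * x₄ ≤ x₂ ∧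
        (ω + 2) * ys i + (3 - ω) * x₄ = 10) ∧
      val = x₁} 2 := by
  constructor
  · refine ⟨1, le_refl 1, fun _ => Set.Icc 0 1, 2, 2, 0, 2, fun _ => 2,
      by norm_num, by norm_num, le_refl 0, by norm_num, fun i => by norm_num,
      Set.iUnion_const _, by norm_num, ?_, rfl⟩
    intro i ω hω
    obtain ⟨h0, h1⟩ := hω
    refine ⟨by linarith, by linarith, by ring⟩
  · rintro v ⟨k, hk, Ωs, x₁, x₂, x₃, x₄, ys, hx₁, hx₂, hx₃, hx₄, hys, hcov,
      hle, hcons, rfl⟩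
    -- every point of [0,1] is in some Ωᵢ
    have hmem : ∀ ω : ℝ, ω ∈ Set.Icc (0:ℝ) 1 → ∃ i, ω ∈ Ωs i := by
      intro ω hω
      rw [← hcov] at hω
      simpa using hω
    -- pigeonhole: some Ωᵢ contains two distinct points, hence x₄ = 2
    have hinf : (Set.Icc (0:ℝ) 1).Infinite := Set.Icc_infinite (by norm_num)
    haveI := hinf.to_subtype
    have hch : ∀ ω : Set.Icc (0:ℝ) 1, ∃ i, (ω : ℝ) ∈ Ωs i :=
      fun ω => hmem ω ω.2
    choose f hf using hch
    obtain ⟨a, b, hab, hfab⟩ := Finite.exists_ne_map_eq_of_infinite f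
    have ha := (hcons (f a) a (hf a)).2.2
    have hb := (hcons (f b) b (hf b)).2.2
    rw [hfab] at ha
    have hab' : (a : ℝ) ≠ (b : ℝ) := fun h => hab (Subtype.ext h)
    have hy : ys (f b) = x₄ := by
      have h : ((a : ℝ) - b) * (ys (f b) - x₄) = 0 := by linarith
      rcases mul_eq_zero.1 h with h' | h'
      · exact absurd (by linarith) hab'
      · linarith
    have hx4 : x₄ = 2 := by
      rw [hy] at hb; linarith
    -- use ω = 0 and ω = 1
    obtain ⟨i0, hi0⟩ := hmem 0 (by norm_num)
    obtain ⟨i1, hi1⟩ := hmem 1 (by norm_num)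
    have h0 := (hcons i0 0 hi0).1
    have h1 := (hcons i1 1 hi1).2.1
    rw [hx4] at h0 h1
    norm_num at h0 h1
    linarith
end

section
/- If two closed sets F₁, F₂ cover the boundary of a compact convex set Ω' ⊆ ℝⁿ of dimension at least 2, then Ω' ⊆ conv(F₁) ∪ conv(F₂). -/
open Set Metric

/-- On a sphere in a real space of rank > 1, if two closed sets cover the sphere then one of
them contains an antipodal pair. -/
lemma sphere_antipodal {V : Type*} [NormedAddCommGroup V] [NormedSpace ℝ V]
    (h : 1 < Module.rank ℝ V) (A B : Set V) (hA : IsClosed A) (hB : IsClosed B)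
    (hcov : Metric.sphere (0 : V) 1 ⊆ A ∪ B) :
    ∃ u ∈ Metric.sphere (0 : V) 1, (u ∈ A ∧ -u ∈ A) ∨ (u ∈ B ∧ -u ∈ B) := by
  by_contra hcon
  push_neg at hcon
  have hneg : ∀ u ∈ Metric.sphere (0 : V) 1, -u ∈ Metric.sphere (0 : V) 1 := by
    intro u hu
    simpa [mem_sphere_zero_iff_norm] using mem_sphere_zero_iff_norm.mp hu
  have hconn := isConnected_sphere h (0 : V) zero_le_one
  obtain ⟨u0, hu0⟩ := hconn.nonempty
  have hne : (Metric.sphere (0 : V) 1 ∩ A).Nonempty ∧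
      (Metric.sphere (0 : V) 1 ∩ B).Nonempty := by
    rcases hcov hu0 with h0 | h0
    · refine ⟨⟨u0, hu0, h0⟩, ⟨-u0, hneg u0 hu0, ?_⟩⟩
      rcases hcov (hneg u0 hu0) with h1 | h1
      · exact absurd h1 ((hcon u0 hu0).1 h0)
      · exact h1
    · refine ⟨⟨-u0, hneg u0 hu0, ?_⟩, ⟨u0, hu0, h0⟩⟩
      rcases hcov (hneg u0 hu0) with h1 | h1
      · exact h1
      · exact absurd h1 ((hcon u0 hu0).2 h0)
  obtain ⟨v, hvS, hvA, hvB⟩ :=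
    isPreconnected_closed_iff.mp hconn.isPreconnected A B hA hB hcov hne.1 hne.2
  rcases hcov (hneg v hvS) with h1 | h1
  · exact (hcon v hvS).1 hvA h1
  · exact (hcon v hvS).2 hvB h1

/-- A ray from an intrinsic-interior point of a compact set, in a direction of the vector span,
hits the intrinsic frontier at a parameter bounded below and above. -/
lemma ray_hits_frontier {n : ℕ} (Ω' : Set (EuclideanSpace ℝ (Fin n)))
    (hcomp : IsCompact Ω') {x : EuclideanSpace ℝ (Fin n)}
    (hx : x ∈ Ω') (hxspan : x ∈ affineSpan ℝ Ω')
    {ε R : ℝ} (hε : 0 < ε)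
    (hball : ∀ z ∈ affineSpan ℝ Ω', dist z x < ε → z ∈ Ω')
    (hR : Ω' ⊆ Metric.closedBall x R)
    {u : EuclideanSpace ℝ (Fin n)} (hu : u ∈ vectorSpan ℝ Ω') (hnorm : ‖u‖ = 1) :
    ∃ t, t ∈ Set.Icc (ε / 2) R ∧ t • u + x ∈ intrinsicFrontier ℝ Ω' := by
  have hspan : ∀ t : ℝ, t • u + x ∈ affineSpan ℝ Ω' := by
    intro t
    have : t • u ∈ (affineSpan ℝ Ω').direction := by
      rw [direction_affineSpan]; exact Submodule.smul_mem _ t hu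
    simpa [vadd_eq_add] using AffineSubspace.vadd_mem_of_mem_direction this hxspan
  have hdist : ∀ t : ℝ, dist (t • u + x) x = |t| := by
    intro t; simp [dist_eq_norm, norm_smul, hnorm]
  set T : Set ℝ := {t : ℝ | 0 ≤ t ∧ t • u + x ∈ Ω'} with hT
  have hTclosed : IsClosed T := by
    have : T = Set.Ici (0:ℝ) ∩ (fun t : ℝ => t • u + x) ⁻¹' Ω' := by
      ext t; simp [hT, Set.mem_Ici, and_comm]
    rw [this]
    exact isClosed_Ici.inter (hcomp.isClosed.preimage
      ((continuous_id.smul continuous_const).add continuous_const))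
  have hTbdd : BddAbove T := by
    refine ⟨R, fun t ht => ?_⟩
    have := hR ht.2
    rw [Metric.mem_closedBall, hdist t, abs_of_nonneg ht.1] at this
    exact this
  have hT0 : (0:ℝ) ∈ T := ⟨le_refl 0, by simpa using hx⟩
  set t₀ := sSup T with ht₀
  have ht₀mem : t₀ ∈ T := hTclosed.csSup_mem ⟨0, hT0⟩ hTbdd
  have hhalf : ε / 2 ∈ T := by
    refine ⟨by linarith, hball _ (hspan _) ?_⟩
    rw [hdist]
    rw [abs_of_nonneg (by linarith)]
    linarith
  have ht₀lb : ε / 2 ≤ t₀ := le_csSup hTbdd hhalf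
  have ht₀ub : t₀ ≤ R := by
    have := hR ht₀mem.2
    rw [Metric.mem_closedBall, hdist t₀, abs_of_nonneg ht₀mem.1] at this
    exact this
  refine ⟨t₀, ⟨ht₀lb, ht₀ub⟩, ?_⟩
  rw [mem_intrinsicFrontier]
  refine ⟨⟨t₀ • u + x, hspan t₀⟩, ?_, rfl⟩
  refine ⟨subset_closure (by simpa using ht₀mem.2), ?_⟩
  · -- not interior
    intro hint
    rw [mem_interior_iff_mem_nhds, Metric.mem_nhds_iff] at hint
    obtain ⟨δ, hδ, hball'⟩ := hint
    have hq : (t₀ + δ / 2) • u + x ∈ Ω' := by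
      have hmem : (⟨(t₀ + δ / 2) • u + x, hspan _⟩ :
          (affineSpan ℝ Ω' : Set (EuclideanSpace ℝ (Fin n)))) ∈
          Metric.ball (⟨t₀ • u + x, hspan t₀⟩ :
          (affineSpan ℝ Ω' : Set (EuclideanSpace ℝ (Fin n)))) δ := by
        rw [Metric.mem_ball, Subtype.dist_eq]
        have : (t₀ + δ / 2) • u + x - (t₀ • u + x) = (δ / 2) • u := by
          rw [add_smul]; abel
        rw [dist_eq_norm, this, norm_smul, hnorm]
        rw [Real.norm_eq_abs, abs_of_nonneg (by linarith)]
        linarith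
      exact hball' hmem
    have : t₀ + δ / 2 ∈ T := ⟨by linarith [ht₀mem.1], hq⟩
    have := le_csSup hTbdd this
    linarith

/-- Helper: if some closed set contains the two endpoints of a segment through `x`, then
`x` is in its convex hull. -/
lemma mem_convexHull_of_antipodal {n : ℕ} {x w : EuclideanSpace ℝ (Fin n)}
    {F : Set (EuclideanSpace ℝ (Fin n))} {t₁ t₂ : ℝ} (h₁ : 0 < t₁) (h₂ : 0 < t₂)
    (hp : t₁ • w + x ∈ F) (hq : t₂ • (-w) + x ∈ F) :
    x ∈ convexHull ℝ F := by
  have hs : 0 < t₁ + t₂ := by linarith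
  have hseg : x ∈ segment ℝ (t₁ • w + x) (t₂ • (-w) + x) := by
    refine ⟨t₂ / (t₁ + t₂), t₁ / (t₁ + t₂), by positivity, by positivity, ?_, ?_⟩
    · field_simp; ring
    · match_scalars
      · field_simp; ring
      · field_simp; ring
  exact (convex_convexHull ℝ F).segment_subset
    (subset_convexHull ℝ F hp) (subset_convexHull ℝ F hq) hseg

theorem cover_two_closed_sets_dim_ge_two {n : ℕ}
    (Ω' : Set (EuclideanSpace ℝ (Fin n)))
    (hcomp : IsCompact Ω') (hconv : Convex ℝ Ω')
    (hdim : 2 ≤ Module.finrank ℝ (vectorSpan ℝ Ω'))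
    (F₁ F₂ : Set (EuclideanSpace ℝ (Fin n)))
    (h1 : IsClosed F₁) (h2 : IsClosed F₂)
    (hcover : intrinsicFrontier ℝ Ω' ⊆ F₁ ∪ F₂) :
    Ω' ⊆ convexHull ℝ F₁ ∪ convexHull ℝ F₂ := by
  intro x hx
  rcases em (x ∈ intrinsicFrontier ℝ Ω') with hf | hf
  · rcases hcover hf with h | h
    · exact Or.inl (subset_convexHull ℝ F₁ h)
    · exact Or.inr (subset_convexHull ℝ F₂ h)
  have hxint : x ∈ intrinsicInterior ℝ Ω' := by
    have hc : x ∈ intrinsicClosure ℝ Ω' := subset_intrinsicClosure hx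
    rw [← intrinsicInterior_union_intrinsicFrontier] at hc
    exact hc.resolve_right hf
  have hxspan : x ∈ affineSpan ℝ Ω' := subset_affineSpan ℝ Ω' hx
  -- extract a metric ball witness for intrinsic interiority
  obtain ⟨y, hyint, hyx⟩ := mem_intrinsicInterior.mp hxint
  obtain ⟨ε, hε, hballε⟩ := Metric.mem_nhds_iff.mp (mem_interior_iff_mem_nhds.mp hyint)
  have hball : ∀ z ∈ affineSpan ℝ Ω', dist z x < ε → z ∈ Ω' := by
    intro z hz hdz
    have : (⟨z, hz⟩ : (affineSpan ℝ Ω' : Set (EuclideanSpace ℝ (Fin n)))) ∈ Metric.ball y ε := by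
      rw [Metric.mem_ball, Subtype.dist_eq, hyx]; exact hdz
    exact hballε this
  -- bound
  obtain ⟨R, hR⟩ := hcomp.isBounded.subset_closedBall x
  set V := vectorSpan ℝ Ω'
  haveI : Nontrivial V := by
    have : 0 < Module.finrank ℝ V := by omega
    exact Module.nontrivial_of_finrank_pos this
  have hrank : 1 < Module.rank ℝ V := by
    rw [← Module.finrank_eq_rank]
    exact_mod_cast lt_of_lt_of_le one_lt_two (by exact_mod_cast hdim)
  -- the two closed sets on the sphere of directions
  set f : ℝ × V → EuclideanSpace ℝ (Fin n) := fun p => p.1 • (p.2 : EuclideanSpace ℝ (Fin n)) + x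
    with hf_def
  have hfc : Continuous f :=
    (continuous_fst.smul (continuous_subtype_val.comp continuous_snd)).add continuous_const
  have hbox : IsCompact ((Set.Icc (ε / 2) R) ×ˢ (Metric.sphere (0 : V) 1)) :=
    isCompact_Icc.prod (isCompact_sphere _ _)
  set A₁ := Prod.snd '' (((Set.Icc (ε / 2) R) ×ˢ (Metric.sphere (0 : V) 1)) ∩ f ⁻¹' F₁) with hA₁
  set A₂ := Prod.snd '' (((Set.Icc (ε / 2) R) ×ˢ (Metric.sphere (0 : V) 1)) ∩ f ⁻¹' F₂) with hA₂
  have hA₁c : IsClosed A₁ :=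
    ((hbox.inter_right (h1.preimage hfc)).image continuous_snd).isClosed
  have hA₂c : IsClosed A₂ :=
    ((hbox.inter_right (h2.preimage hfc)).image continuous_snd).isClosed
  have hcov : Metric.sphere (0 : V) 1 ⊆ A₁ ∪ A₂ := by
    intro u hu
    have hun : ‖(u : EuclideanSpace ℝ (Fin n))‖ = 1 := by
      have := mem_sphere_zero_iff_norm.mp hu
      simpa using this
    obtain ⟨t, htmem, htf⟩ := ray_hits_frontier Ω' hcomp hx hxspan hε hball hR u.2 hun
    rcases hcover htf with h | h
    · exact Or.inl ⟨(t, u), ⟨⟨htmem, hu⟩, h⟩, rfl⟩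
    · exact Or.inr ⟨(t, u), ⟨⟨htmem, hu⟩, h⟩, rfl⟩
  obtain ⟨u, huS, hcase⟩ := sphere_antipodal hrank A₁ A₂ hA₁c hA₂c hcov
  rcases hcase with ⟨hu1, hu2⟩ | ⟨hu1, hu2⟩
  · obtain ⟨⟨t₁, u₁⟩, ⟨⟨ht₁, -⟩, hF⟩, hu₁⟩ := hu1
    obtain ⟨⟨t₂, u₂⟩, ⟨⟨ht₂, -⟩, hF'⟩, hu₂⟩ := hu2
    subst hu₁ hu₂
    refine Or.inl (mem_convexHull_of_antipodal (w := (u₁ : EuclideanSpace ℝ (Fin n)))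
      (t₁ := t₁) (t₂ := t₂) (by linarith [ht₁.1]) (by linarith [ht₂.1]) (by simpa [hf_def] using hF) ?_)
    simpa [hf_def] using hF'
  · obtain ⟨⟨t₁, u₁⟩, ⟨⟨ht₁, -⟩, hF⟩, hu₁⟩ := hu1
    obtain ⟨⟨t₂, u₂⟩, ⟨⟨ht₂, -⟩, hF'⟩, hu₂⟩ := hu2
    subst hu₁ hu₂
    refine Or.inr (mem_convexHull_of_antipodal (w := (u₁ : EuclideanSpace ℝ (Fin n)))
      (t₁ := t₁) (t₂ := t₂) (by linarith [ht₁.1]) (by linarith [ht₂.1]) (by simpa [hf_def] using hF) ?_)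
    simpa [hf_def] using hF'
end

section
/- If two closed sets B₁, B₂ cover the circle S¹, then at least one of them contains a pair of antipodal points. -/
theorem circle_two_closed_sets_antipodal
    (B₁ B₂ : Set (EuclideanSpace ℝ (Fin 2)))
    (h1 : IsClosed B₁) (h2 : IsClosed B₂)
    (hcover : Metric.sphere (0 : EuclideanSpace ℝ (Fin 2)) 1 ⊆ B₁ ∪ B₂) :
    (∃ x ∈ Metric.sphere (0 : EuclideanSpace ℝ (Fin 2)) 1, x ∈ B₁ ∧ -x ∈ B₁) ∨
    (∃ x ∈ Metric.sphere (0 : EuclideanSpace ℝ (Fin 2)) 1, x ∈ B₂ ∧ -x ∈ B₂) := by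
  have hrank : 1 < Module.rank ℝ (EuclideanSpace ℝ (Fin 2)) := by
    have h2' : Module.finrank ℝ (EuclideanSpace ℝ (Fin 2)) = 2 :=
      finrank_euclideanSpace_fin
    have := Module.finrank_eq_rank ℝ (EuclideanSpace ℝ (Fin 2))
    rw [h2'] at this
    rw [← this]; norm_num
  obtain ⟨a, ha⟩ : (Metric.sphere (0 : EuclideanSpace ℝ (Fin 2)) 1).Nonempty :=
    (NormedSpace.sphere_nonempty).2 zero_le_one
  have hmem : ∀ x : EuclideanSpace ℝ (Fin 2), x ∈ Metric.sphere (0 : EuclideanSpace ℝ (Fin 2)) 1 →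
      -x ∈ Metric.sphere (0 : EuclideanSpace ℝ (Fin 2)) 1 := by
    intro x hx
    simpa [mem_sphere_iff_norm] using hx
  rcases B₁.eq_empty_or_nonempty with hB1 | hB1
  · right
    refine ⟨a, ha, ?_, ?_⟩
    · have := hcover ha; simpa [hB1] using this
    · have := hcover (hmem a ha); simpa [hB1] using this
  · set f : EuclideanSpace ℝ (Fin 2) → ℝ :=
      fun x => Metric.infDist x B₁ - Metric.infDist (-x) B₁ with hf
    have hcont : Continuous f :=
      (Metric.continuous_infDist_pt B₁).sub
        ((Metric.continuous_infDist_pt B₁).comp continuous_neg)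
    have hodd : ∀ x, f (-x) = -f x := by
      intro x; simp only [hf, neg_neg]; ring
    have hconn : IsPreconnected (Metric.sphere (0 : EuclideanSpace ℝ (Fin 2)) 1) :=
      isPreconnected_sphere hrank 0 1
    have hzero : ∃ x₀ ∈ Metric.sphere (0 : EuclideanSpace ℝ (Fin 2)) 1, f x₀ = 0 := by
      rcases le_total (f a) 0 with h | h
      · have h2' : 0 ≤ f (-a) := by rw [hodd]; linarith
        obtain ⟨x₀, hx₀, hfx₀⟩ :=
          hconn.intermediate_value ha (hmem a ha) hcont.continuousOn ⟨h, h2'⟩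
        exact ⟨x₀, hx₀, hfx₀⟩
      · have h2' : f (-a) ≤ 0 := by rw [hodd]; linarith
        obtain ⟨x₀, hx₀, hfx₀⟩ :=
          hconn.intermediate_value (hmem a ha) ha hcont.continuousOn ⟨h2', h⟩
        exact ⟨x₀, hx₀, hfx₀⟩
    obtain ⟨x₀, hx₀, hfx₀⟩ := hzero
    have heq : Metric.infDist x₀ B₁ = Metric.infDist (-x₀) B₁ := by
      have : Metric.infDist x₀ B₁ - Metric.infDist (-x₀) B₁ = 0 := hfx₀
      linarith
    rcases eq_or_lt_of_le (Metric.infDist_nonneg (x := x₀) (s := B₁)) with hd | hd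
    · left
      refine ⟨x₀, hx₀, ?_, ?_⟩
      · exact (h1.mem_iff_infDist_zero hB1).2 hd.symm
      · exact (h1.mem_iff_infDist_zero hB1).2 (heq ▸ hd.symm)
    · right
      have hn1 : x₀ ∉ B₁ := by
        intro h
        rw [Metric.infDist_zero_of_mem h] at hd
        exact lt_irrefl _ hd
      have hn2 : -x₀ ∉ B₁ := by
        intro h
        have h0 := Metric.infDist_zero_of_mem h
        rw [← heq] at h0
        linarith
      refine ⟨x₀, hx₀, ?_, ?_⟩
      · rcases hcover hx₀ with h | h
        · exact absurd h hn1
        · exact h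
      · rcases hcover (hmem x₀ hx₀) with h | h
        · exact absurd h hn2
        · exact h
end
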